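/- Functions of the form f(t) = Φ(ut+v) give equality in the one-dimensional Bobkov inequality: for all u, v ∈ ℝ, ∫_ℝ √(I(Φ(ut+v))² + (u·φ(ut+v))²) dγ(t) = I(∫_ℝ Φ(ut+v) dγ(t)). -/

import Mathlib

open Real MeasureTheory Set Filter

noncomputable def phi (s : ℝ) : ℝ := Real.exp (-s ^ 2 / 2) / Real.sqrt (2 * Real.pi)

noncomputable def Phi (t : ℝ) : ℝ := ∫ s in Set.Iic t, phi s

noncomputable def GaussI (x : ℝ) : ℝ :=
  if 0 < x ∧ x < 1 then phi (Function.invFun Phi x) else 0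

/-!
Write `c = √(1 + u²)`. Completing the square gives `φ(ut + v) φ(t) = φ(v/c) φ(ct + uv/c)`, so
`∫ φ(ut + v) dγ(t) = φ(v/c)/c`. Differentiating `v ↦ ∫ Φ(ut + v) dγ(t)` under the integral
sign, this shows that it agrees with `v ↦ Φ(v/c)` up to a constant, which vanishes at `-∞`. Since
`I(Φ(x)) = φ(x)`, the integrand on the left is `c φ(ut + v) φ(t)`, and both sides equal `φ(v/c)`.
-/

open ProbabilityTheory Topology

lemma phi_eq_gaussianPDFReal : phi = gaussianPDFReal 0 1 := by
  ext s
  simp [phi, gaussianPDFReal, div_eq_inv_mul]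

lemma phi_pos (s : ℝ) : 0 < phi s := by
  rw [phi_eq_gaussianPDFReal]
  exact gaussianPDFReal_pos _ _ _ one_ne_zero

@[fun_prop]
lemma continuous_phi : Continuous phi := by
  unfold phi
  fun_prop

lemma integrable_phi : Integrable phi := by
  rw [phi_eq_gaussianPDFReal]
  exact integrable_gaussianPDFReal _ _

lemma integral_phi : ∫ s, phi s = 1 := by
  rw [phi_eq_gaussianPDFReal]
  exact integral_gaussianPDFReal_eq_one _ one_ne_zero

lemma phi_le (s : ℝ) : phi s ≤ (√(2 * π))⁻¹ := by
  rw [phi, div_eq_inv_mul]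
  refine mul_le_of_le_one_right (by positivity) (exp_le_one_iff.2 ?_)
  nlinarith [sq_nonneg s]

lemma integral_phi_comp_mul_add (a b : ℝ) : ∫ t, phi (a * t + b) = |a|⁻¹ := by
  rw [Measure.integral_comp_mul_left (fun y => phi (y + b)), integral_add_right_eq_self,
    integral_phi, abs_inv, smul_eq_mul, mul_one]

/-- Completing the square: `(u t + v)² + t² = (c t + u v / c)² + (v / c)²` with `c² = 1 + u²`. -/
lemma phi_mul_phi_eq (u v t : ℝ) :
    phi (u * t + v) * phi t =
      phi (v / √(1 + u ^ 2)) * phi (√(1 + u ^ 2) * t + u * v / √(1 + u ^ 2)) := by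
  have hc : √(1 + u ^ 2) ^ 2 = 1 + u ^ 2 := sq_sqrt (by positivity)
  have hc0 : √(1 + u ^ 2) ≠ 0 := (sqrt_pos.2 (by positivity)).ne'
  simp only [phi, div_mul_div_comm, ← exp_add]
  congr 2
  field_simp
  rw [hc]
  ring

lemma integral_phi_comp_mul_add_mul_phi (u v : ℝ) :
    ∫ t, phi (u * t + v) * phi t = phi (v / √(1 + u ^ 2)) / √(1 + u ^ 2) := by
  simp_rw [phi_mul_phi_eq u v]
  rw [integral_const_mul, integral_phi_comp_mul_add, abs_of_pos (sqrt_pos.2 (by positivity)),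
    div_eq_mul_inv (phi _)]

lemma Phi_eq_cdf : Phi = cdf (gaussianReal 0 1) := by
  ext x
  rw [cdf_eq_real, measureReal_def, gaussianReal_apply_eq_integral _ one_ne_zero,
    ENNReal.toReal_ofReal (setIntegral_nonneg measurableSet_Iic
      fun s _ => gaussianPDFReal_nonneg _ _ s), Phi, phi_eq_gaussianPDFReal]

lemma tendsto_Phi_atBot : Tendsto Phi atBot (𝓝 0) :=
  Phi_eq_cdf ▸ tendsto_cdf_atBot _

lemma Phi_sub_Phi (a b : ℝ) : Phi b - Phi a = ∫ s in a..b, phi s :=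
  intervalIntegral.integral_Iic_sub_Iic integrable_phi.integrableOn integrable_phi.integrableOn

lemma hasDerivAt_Phi (x : ℝ) : HasDerivAt Phi (phi x) x := by
  have h := (continuous_phi.integral_hasStrictDerivAt 0 x).hasDerivAt.add_const (Phi 0)
  refine h.congr_of_eventuallyEq (Eventually.of_forall fun y => ?_)
  simp only [← Phi_sub_Phi, sub_add_cancel]

@[fun_prop]
lemma continuous_Phi : Continuous Phi :=
  continuous_iff_continuousAt.2 fun x => (hasDerivAt_Phi x).continuousAt

lemma strictMono_Phi : StrictMono Phi := fun a b hab => by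
  have hpos : 0 < ∫ s in a..b, phi s :=
    intervalIntegral.intervalIntegral_pos_of_pos (continuous_phi.intervalIntegrable a b) phi_pos hab
  linarith [Phi_sub_Phi a b]

lemma Phi_pos (x : ℝ) : 0 < Phi x := by
  have h : 0 ≤ Phi (x - 1) := Phi_eq_cdf ▸ cdf_nonneg _ _
  linarith [strictMono_Phi (sub_one_lt x)]

lemma Phi_lt_one (x : ℝ) : Phi x < 1 := by
  have h : Phi (x + 1) ≤ 1 := Phi_eq_cdf ▸ cdf_le_one _ _
  linarith [strictMono_Phi (lt_add_one x)]

lemma GaussI_Phi (x : ℝ) : GaussI (Phi x) = phi x := by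
  rw [GaussI, if_pos ⟨Phi_pos x, Phi_lt_one x⟩,
    Function.leftInverse_invFun strictMono_Phi.injective x]

section GaussianAverage

variable (u : ℝ)

lemma norm_Phi_mul_phi_le (x t : ℝ) : ‖Phi x * phi t‖ ≤ phi t := by
  rw [norm_mul, norm_of_nonneg (Phi_pos x).le, norm_of_nonneg (phi_pos t).le]
  exact mul_le_of_le_one_left (phi_pos t).le (Phi_lt_one x).le

lemma integrable_Phi_comp_mul_add_mul_phi (v : ℝ) :
    Integrable (fun t => Phi (u * t + v) * phi t) :=
  integrable_phi.mono' (by fun_prop) (ae_of_all _ fun t => norm_Phi_mul_phi_le _ t)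

lemma hasDerivAt_integral_Phi_comp_mul_add_mul_phi (v : ℝ) :
    HasDerivAt (fun w => ∫ t, Phi (u * t + w) * phi t) (∫ t, phi (u * t + v) * phi t) v := by
  refine (hasDerivAt_integral_of_dominated_loc_of_deriv_le (F := fun w t => Phi (u * t + w) * phi t)
    (F' := fun w t => phi (u * t + w) * phi t) (bound := fun t => (√(2 * π))⁻¹ * phi t)
    univ_mem (Eventually.of_forall fun w => by fun_prop)
    (integrable_Phi_comp_mul_add_mul_phi u v) (by fun_prop) (ae_of_all _ fun t w _ => ?_)
    (integrable_phi.const_mul _) (ae_of_all _ fun t w _ => ?_)).2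
  · rw [norm_mul, norm_of_nonneg (phi_pos _).le, norm_of_nonneg (phi_pos t).le]
    exact mul_le_mul_of_nonneg_right (phi_le _) (phi_pos t).le
  · have h := (hasDerivAt_Phi (u * t + w)).comp w ((hasDerivAt_id w).const_add (u * t))
    simpa using h.mul_const (phi t)

lemma tendsto_integral_Phi_comp_mul_add_mul_phi_atBot :
    Tendsto (fun w => ∫ t, Phi (u * t + w) * phi t) atBot (𝓝 0) := by
  have h_lim (t : ℝ) : Tendsto (fun w => Phi (u * t + w) * phi t) atBot (𝓝 0) := by
    have h := tendsto_Phi_atBot.comp (tendsto_atBot_add_const_left _ (u * t) tendsto_id)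
    simpa using h.mul_const (phi t)
  simpa using tendsto_integral_filter_of_dominated_convergence phi
    (Eventually.of_forall fun w => by fun_prop)
    (Eventually.of_forall fun w => ae_of_all _ fun t => norm_Phi_mul_phi_le _ t) integrable_phi
    (ae_of_all _ h_lim)

end GaussianAverage

lemma eq_of_hasDerivAt_of_tendsto_atBot {E : Type*} [NormedAddCommGroup E] [NormedSpace ℝ E]
    {f g f' : ℝ → E} {l : E} (hf : ∀ x, HasDerivAt f (f' x) x) (hg : ∀ x, HasDerivAt g (f' x) x)
    (hfl : Tendsto f atBot (𝓝 l)) (hgl : Tendsto g atBot (𝓝 l)) : f = g := by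
  have hD (x : ℝ) : HasDerivAt (f - g) 0 x := by simpa using (hf x).sub (hg x)
  have hconst : ∀ x y, (f - g) x = (f - g) y :=
    is_const_of_deriv_eq_zero (fun x => (hD x).differentiableAt) fun x => (hD x).deriv
  have hlim : Tendsto (f - g) atBot (𝓝 0) := by
    rw [← sub_self l]
    exact hfl.sub hgl
  funext x
  exact sub_eq_zero.1 (tendsto_nhds_unique (tendsto_const_nhds.congr (hconst x)) hlim)

lemma integral_Phi_comp_mul_add_mul_phi (u v : ℝ) :
    ∫ t, Phi (u * t + v) * phi t = Phi (v / √(1 + u ^ 2)) := by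
  have hc : 0 < √(1 + u ^ 2) := sqrt_pos.2 (by positivity)
  refine congrFun (eq_of_hasDerivAt_of_tendsto_atBot
    (f' := fun w => phi (w / √(1 + u ^ 2)) / √(1 + u ^ 2)) (fun w => ?_) (fun w => ?_)
    (tendsto_integral_Phi_comp_mul_add_mul_phi_atBot u)
    (tendsto_Phi_atBot.comp (tendsto_id.atBot_div_const hc))) v
  · rw [← integral_phi_comp_mul_add_mul_phi]
    exact hasDerivAt_integral_Phi_comp_mul_add_mul_phi u w
  · simpa [div_eq_mul_inv] using (hasDerivAt_Phi _).comp w ((hasDerivAt_id w).div_const _)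

lemma sqrt_GaussI_Phi_sq_add_sq (u x : ℝ) :
    √(GaussI (Phi x) ^ 2 + (u * phi x) ^ 2) = √(1 + u ^ 2) * phi x := by
  rw [GaussI_Phi, show phi x ^ 2 + (u * phi x) ^ 2 = (1 + u ^ 2) * phi x ^ 2 by ring,
    sqrt_mul (by positivity), sqrt_sq (phi_pos x).le]

theorem stmt_17 (u v : ℝ) :
    ∫ t, Real.sqrt (GaussI (Phi (u * t + v)) ^ 2 + (u * phi (u * t + v)) ^ 2) * phi t =
      GaussI (∫ t, Phi (u * t + v) * phi t) := by
  simp_rw [sqrt_GaussI_Phi_sq_add_sq, mul_assoc]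
  rw [integral_const_mul, integral_phi_comp_mul_add_mul_phi, integral_Phi_comp_mul_add_mul_phi,
    GaussI_Phi, mul_div_cancel₀ _ (sqrt_pos.2 (by positivity)).ne']
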